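/- arXiv:2111.06724 — 3 statements merged into one kernel-verified Lean document; each statement's English description precedes it below -/
import Mathlib

section
/- Let F be a self-similar set satisfying the strong separation condition, i.e. the attractor of a finite system of contracting similarities f₁, …, f_m on ℝ^p whose images f_i(F) are pairwise disjoint. Then for every 0 < α < 1 there is a dense Gδ subset 𝒢 of C₁^α(F) on which λ(f(F)) = 0 for every f ∈ 𝒢, and D_*(α, F) = 0. -/
/-!
Finite-range functions are dense in `C₁^α(F)`. Given `g`, average `(1 - γ) g` over the
approximations of `x` obtained by freezing the address of `x` after `k` digits, for `k` in a
long window of levels. The average is close to `g`, it takes finitely many values, and it is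
`α`-Hölder with constant `1`: strong separation makes `dist x y` comparable to the scale of the
level where the addresses of `x` and `y` split, and for `α ≤ 1` the resulting excess factors
form a geometric series over the levels. The volume of the range is upper semicontinuous in the
supremum metric, so by Baire the functions with null range form a dense `Gδ`; for such `f`
almost every level set is empty, so `D_*^f(F) = 0`.
-/

open MeasureTheory

noncomputable section

/-- `C₁^α(F)`: the set of 1-Hölder-α functions `F → ℝ`, as a subset of the bounded
continuous functions on `F` (which carry the supremum metric). -/
def HolderBall (α : ℝ) {p : ℕ} (F : Set (EuclideanSpace ℝ (Fin p))) :
    Set (BoundedContinuousFunction ↥F ℝ) :=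
  {f | ∀ x y : ↥F,
    |f x - f y| ≤ dist (x : EuclideanSpace ℝ (Fin p)) (y : EuclideanSpace ℝ (Fin p)) ^ α}

/-- `D_*^f(F) = sup {d : λ{r : dim_H (f⁻¹(r)) ≥ d} > 0}`. -/
def DstarF {p : ℕ} (F : Set (EuclideanSpace ℝ (Fin p))) (f : ↥F → ℝ) : ℝ :=
  sSup {d : ℝ | 0 < volume {r : ℝ | ENNReal.ofReal d ≤ dimH (Subtype.val '' (f ⁻¹' {r}))}}

/-- `D_*(α, F)`: the supremum over all dense Gδ subsets `G` of `C₁^α(F)` of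
`inf {D_*^f(F) : f ∈ G}`. -/
def DStar {p : ℕ} (α : ℝ) (F : Set (EuclideanSpace ℝ (Fin p))) : ℝ :=
  sSup {d : ℝ | ∃ G : Set ↥(HolderBall α F), Dense G ∧ IsGδ G ∧
    d = sInf ((fun g : ↥(HolderBall α F) =>
      DstarF F ⇑(g : BoundedContinuousFunction ↥F ℝ)) '' G)}

open Set Filter Topology Function
open scoped ENNReal BoundedContinuousFunction BigOperators

lemma sum_ite_pow_sub_le {ρ : ℝ} (hρ0 : 0 ≤ ρ) (hρ1 : ρ < 1) (j : ℕ) (s : Finset ℕ) :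
    ∑ k ∈ s, (if j ≤ k then ρ ^ (k - j) else 0) ≤ (1 - ρ)⁻¹ := by
  rw [← Finset.sum_filter, ← Finset.sum_image (g := fun k => k - j)
    (fun a ha b hb hab => by
      simp only [Finset.coe_filter, mem_ofPred_eq] at ha hb; simp only at hab; omega)]
  rw [← tsum_geometric_of_lt_one hρ0 hρ1]
  exact (summable_geometric_of_lt_one hρ0 hρ1).sum_le_tsum _ fun i _ => pow_nonneg hρ0 i

lemma exists_lt_one_forall_le {ι : Type*} [Finite ι] {r : ι → ℝ} (hr : ∀ i, r i < 1) :
    ∃ ρ < 1, ∀ i, r i ≤ ρ := by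
  have : ∀ i, ∀ᶠ ρ in 𝓝[<] (1 : ℝ), r i ≤ ρ := fun i =>
    nhdsWithin_le_nhds (eventually_ge_nhds (hr i))
  obtain ⟨ρ, hρ, hρ1⟩ := ((eventually_all.2 this).and self_mem_nhdsWithin).exists
  exact ⟨ρ, hρ1, hρ⟩

lemma continuous_of_abs_sub_le_dist_rpow {Y : Type*} [PseudoMetricSpace Y] {α : ℝ} (hα : 0 < α)
    {h : Y → ℝ} (hh : ∀ x y, |h x - h y| ≤ dist x y ^ α) : Continuous h := by
  refine continuous_iff_continuousAt.2 fun x => tendsto_iff_dist_tendsto_zero.2 ?_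
  refine squeeze_zero (fun _ => dist_nonneg) (fun y => hh y x) ?_
  exact ((continuous_id.dist continuous_const).rpow_const fun _ => Or.inr hα.le).tendsto' x 0
    (by simp [Real.zero_rpow hα.ne'])

lemma abs_expect_sub_le_of_forall {ι : Type*} {s : Finset ι} {f : ι → ℝ} {b ε : ℝ}
    (hs : s.Nonempty) (h : ∀ i ∈ s, |f i - b| ≤ ε) : |𝔼 i ∈ s, f i - b| ≤ ε := by
  rw [← Finset.expect_const hs b, ← Finset.expect_sub_distrib]
  exact (Finset.abs_expect_le _ _).trans (Finset.expect_le hs h)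

lemma abs_one_sub_mul_sub_le {Y : Type*} [PseudoMetricSpace Y] {α γ : ℝ} (hγ : 0 ≤ γ)
    (g : Y →ᵇ ℝ) (hg : ∀ x y, |g x - g y| ≤ dist x y ^ α) (a b : Y) :
    |(1 - γ) * g a - g b| ≤ dist a b ^ α + γ * ‖g‖ := by
  calc |(1 - γ) * g a - g b| = |(g a - g b) + -(γ * g a)| := by ring_nf
    _ ≤ dist a b ^ α + γ * ‖g‖ := by
        refine (abs_add_le _ _).trans (add_le_add (hg a b) ?_)
        rw [abs_neg, abs_mul, abs_of_nonneg hγ, ← Real.norm_eq_abs]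
        exact mul_le_mul_of_nonneg_left (g.norm_coe_le_norm a) hγ

lemma exists_pos_le_dist_of_isCompact {X : Type*} [MetricSpace X] {s : Set (X × X)}
    (hs : IsCompact s) (hoff : ∀ p ∈ s, p.1 ≠ p.2) : ∃ δ > 0, ∀ p ∈ s, δ ≤ dist p.1 p.2 := by
  rcases s.eq_empty_or_nonempty with rfl | hne
  · exact ⟨1, one_pos, by simp⟩
  obtain ⟨p₀, hp₀, hmin⟩ := hs.exists_isMinOn hne continuous_dist.continuousOn
  exact ⟨dist p₀.1 p₀.2, dist_pos.2 (hoff p₀ hp₀), fun p hp => hmin hp⟩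

lemma exists_pos_le_dist_of_pairwise_disjoint {ι X : Type*} [Finite ι] [MetricSpace X]
    {K : ι → Set X} (hK : ∀ i, IsCompact (K i)) (hdisj : Pairwise (Disjoint on K)) :
    ∃ δ > 0, ∀ i j, i ≠ j → ∀ a ∈ K i, ∀ b ∈ K j, δ ≤ dist a b := by
  obtain ⟨δ, hδ, hle⟩ := exists_pos_le_dist_of_isCompact
    (s := ⋃ q : {q : ι × ι // q.1 ≠ q.2}, K q.1.1 ×ˢ K q.1.2)
    (isCompact_iUnion fun q => (hK _).prod (hK _))
    (by
      simp only [mem_iUnion, mem_prod]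
      rintro ⟨a, b⟩ ⟨⟨⟨i, j⟩, hij⟩, ha, hb⟩ (rfl : a = b)
      exact Set.disjoint_left.1 (hdisj hij) ha hb)
  exact ⟨δ, hδ, fun i j hij a ha b hb =>
    hle (a, b) (mem_iUnion.2 ⟨⟨(i, j), hij⟩, ha, hb⟩)⟩

lemma isGδ_setOf_eq_zero_and_dense {Y : Type*} [TopologicalSpace Y] [BaireSpace Y]
    {Φ : Y → ℝ≥0∞} (hΦ : UpperSemicontinuous Φ) (hdense : ∀ c > 0, Dense {y | Φ y < c}) :
    IsGδ {y | Φ y = 0} ∧ Dense {y | Φ y = 0} := by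
  have hinv_pos (n : ℕ) : 0 < (n : ℝ≥0∞)⁻¹ := ENNReal.inv_pos.2 (ENNReal.natCast_ne_top n)
  have heq : {y | Φ y = 0} = ⋂ n : ℕ, Φ ⁻¹' Iio (n : ℝ≥0∞)⁻¹ := by
    ext y
    simp only [mem_ofPred_eq, mem_iInter, mem_preimage, mem_Iio]
    refine ⟨fun h n => h ▸ hinv_pos n, fun h => ?_⟩
    by_contra hne
    obtain ⟨n, hn⟩ := ENNReal.exists_inv_nat_lt hne
    exact (h n).not_gt hn
  rw [heq]
  exact ⟨.iInter_of_isOpen fun n => hΦ.isOpen_preimage _,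
    dense_iInter_of_isOpen (fun n => hΦ.isOpen_preimage _) fun n => hdense _ (hinv_pos n)⟩

lemma upperSemicontinuous_volume_range {K : Type*} [TopologicalSpace K] [CompactSpace K] :
    UpperSemicontinuous fun g : K →ᵇ ℝ => volume (range g) := by
  intro g c hc
  obtain ⟨V, hgV, hVopen, hVc⟩ := exists_isOpen_lt_of_lt _ _ hc
  obtain ⟨δ, hδ, hthick⟩ :=
    (isCompact_range g.continuous).exists_thickening_subset_open hVopen hgV
  filter_upwards [Metric.ball_mem_nhds g hδ] with h hh
  refine (measure_mono (range_subset_iff.2 fun x => hthick ?_)).trans_lt hVc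
  exact Metric.mem_thickening_iff.2
    ⟨g x, mem_range_self x, (BoundedContinuousFunction.dist_coe_le_dist x).trans_lt hh⟩

/-- `head y` and `shift y` choose one way of writing `y = map i y'`; iterating gives an address
`digit y` of `y`, and `approx z k y = map (digit y 0) (⋯ (map (digit y (k - 1)) z))`. -/
structure SimilarityCoding (ι Y : Type*) [PseudoMetricSpace Y] where
  map : ι → Y → Y
  ratio : ι → ℝ
  dist_map (i : ι) (a b : Y) : dist (map i a) (map i b) = ratio i * dist a b
  head : Y → ι
  shift : Y → Y
  map_head_shift (y : Y) : map (head y) (shift y) = y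

namespace SimilarityCoding

variable {ι Y : Type*} [PseudoMetricSpace Y] (c : SimilarityCoding ι Y)

def digit (y : Y) (l : ℕ) : ι := c.head (c.shift^[l] y)

def approx (z : Y) : ℕ → Y → Y
  | 0, _ => z
  | k + 1, y => c.map (c.head y) (approx z k (c.shift y))

variable {c}

lemma approx_congr {z : Y} {k : ℕ} {x y : Y} (h : ∀ l < k, c.digit x l = c.digit y l) :
    c.approx z k x = c.approx z k y := by
  induction k generalizing x y with
  | zero => rfl
  | succ k ih =>
    simp only [approx, show c.head x = c.head y from h 0 k.succ_pos,
      ih fun l hl => h (l + 1) (by omega)]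

lemma dist_approx_self_le {z : Y} {ρ D : ℝ} (hr : ∀ i, 0 ≤ c.ratio i) (hρ : ∀ i, c.ratio i ≤ ρ)
    (hD : ∀ a b : Y, dist a b ≤ D) (k : ℕ) (y : Y) : dist (c.approx z k y) y ≤ ρ ^ k * D := by
  induction k generalizing y with
  | zero => simpa [approx] using hD z y
  | succ k ih =>
    calc dist (c.approx z (k + 1) y) y
        = c.ratio (c.head y) * dist (c.approx z k (c.shift y)) (c.shift y) := by
          conv_lhs => arg 2; rw [← c.map_head_shift y]
          exact c.dist_map _ _ _
      _ ≤ ρ * (ρ ^ k * D) :=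
          mul_le_mul (hρ _) (ih _) dist_nonneg ((hr (c.head y)).trans (hρ _))
      _ = ρ ^ (k + 1) * D := by ring

lemma dist_eq_of_head_eq {x y : Y} (h : c.head x = c.head y) :
    dist x y = c.ratio (c.head x) * dist (c.shift x) (c.shift y) := by
  conv_lhs => rw [← c.map_head_shift x, ← c.map_head_shift y, ← h]
  exact c.dist_map _ _ _

/-- If the addresses of `x` and `y` split at level `j`, separation makes `dist x y` at least
`δ` times the scale of that level, while `approx z k` moves points by at most `ρ ^ (k - j) * D`
times the same scale. -/
lemma dist_approx_approx_le {z : Y} {ρ D δ : ℝ} (hr : ∀ i, 0 ≤ c.ratio i)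
    (hρ : ∀ i, c.ratio i ≤ ρ) (hD : ∀ a b : Y, dist a b ≤ D) (hδ : 0 < δ)
    (hsep : ∀ x y, c.head x ≠ c.head y → δ ≤ dist x y) {j : ℕ} {x y : Y}
    (hagree : ∀ l < j, c.digit x l = c.digit y l) (hne : c.digit x j ≠ c.digit y j)
    {k : ℕ} (hjk : j ≤ k) :
    dist (c.approx z k x) (c.approx z k y) ≤ dist x y * (1 + 2 * D / δ * ρ ^ (k - j)) := by
  induction j generalizing x y k with
  | zero =>
    have hxy : 1 ≤ dist x y / δ := (one_le_div hδ).2 (hsep x y hne)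
    have hk := dist_approx_self_le (z := z) hr hρ hD k
    have hk0 : 0 ≤ ρ ^ k * D := dist_nonneg.trans (hk x)
    calc dist (c.approx z k x) (c.approx z k y)
        ≤ dist (c.approx z k x) x + dist x y + dist (c.approx z k y) y := by
          simpa only [dist_comm y] using dist_triangle4 _ x y _
      _ ≤ dist x y + 1 * (2 * (ρ ^ k * D)) := by linarith [hk x, hk y]
      _ ≤ dist x y + dist x y / δ * (2 * (ρ ^ k * D)) := by gcongr
      _ = dist x y * (1 + 2 * D / δ * ρ ^ (k - 0)) := by rw [Nat.sub_zero]; ring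
  | succ j ih =>
    obtain ⟨k, rfl⟩ : ∃ k', k = k' + 1 := ⟨k - 1, by omega⟩
    have hhead : c.head x = c.head y := hagree 0 j.succ_pos
    have hshift := ih (x := c.shift x) (y := c.shift y) (fun l hl => hagree (l + 1) (by omega))
      hne (k := k) (by omega)
    calc dist (c.approx z (k + 1) x) (c.approx z (k + 1) y)
        = c.ratio (c.head x) * dist (c.approx z k (c.shift x)) (c.approx z k (c.shift y)) := by
          rw [approx, approx, ← hhead]
          exact c.dist_map _ _ _
      _ ≤ c.ratio (c.head x) * (dist (c.shift x) (c.shift y) * (1 + 2 * D / δ * ρ ^ (k - j))) :=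
          mul_le_mul_of_nonneg_left hshift (hr _)
      _ = dist x y * (1 + 2 * D / δ * ρ ^ (k + 1 - (j + 1))) := by
          rw [dist_eq_of_head_eq hhead, Nat.add_sub_add_right]
          ring

variable (c)

def levelAverage (z : Y) (u : Y → ℝ) (S : Finset ℕ) (y : Y) : ℝ :=
  𝔼 k ∈ S, u (c.approx z k y)

lemma finite_range_levelAverage [Finite ι] (z : Y) (u : Y → ℝ) (S : Finset ℕ) :
    (range (c.levelAverage z u S)).Finite := by
  obtain ⟨N, hN⟩ := S.exists_nat_subset_range
  set key : Y → Fin N → ι := fun y l => c.digit y l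
  have hfactor {x y : Y} (h : key x = key y) : c.levelAverage z u S x = c.levelAverage z u S y :=
    Finset.expect_congr rfl fun k hk => by
      rw [approx_congr fun l hl => congr_fun h ⟨l, hl.trans (Finset.mem_range.1 (hN hk))⟩]
  refine (finite_range fun b : range key => c.levelAverage z u S b.2.choose).subset ?_
  rintro _ ⟨x, rfl⟩
  exact ⟨⟨key x, x, rfl⟩, hfactor (⟨x, rfl⟩ : key x ∈ range key).choose_spec⟩

variable {c}

/-- A single level `k` satisfies the Hölder bound only up to the factor `1 + C * ρ ^ (k - j)`,
which is large for `k` near the splitting level `j`; averaged over many levels the excess is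
summable, hence absorbed by the factor `1 - γ`. -/
lemma abs_levelAverage_sub_le {z : Y} {u : Y → ℝ} {S : Finset ℕ} {ρ D δ α γ : ℝ}
    (hr : ∀ i, 0 ≤ c.ratio i) (hρ : ∀ i, c.ratio i ≤ ρ) (hρ1 : ρ < 1)
    (hD : ∀ a b : Y, dist a b ≤ D) (hδ : 0 < δ)
    (hsep : ∀ x y, c.head x ≠ c.head y → δ ≤ dist x y) (hα0 : 0 ≤ α) (hα1 : α ≤ 1)
    (hγ1 : γ ≤ 1) (hu : ∀ a b, |u a - u b| ≤ (1 - γ) * dist a b ^ α) (hS : S.Nonempty)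
    (hSγ : 2 * D / δ * (1 - ρ)⁻¹ ≤ γ * S.card) (x y : Y) :
    |c.levelAverage z u S x - c.levelAverage z u S y| ≤ dist x y ^ α := by
  classical
  by_cases hall : ∀ l, c.digit x l = c.digit y l
  · have : c.levelAverage z u S x = c.levelAverage z u S y :=
      Finset.expect_congr rfl fun k _ => by rw [approx_congr fun l _ => hall l]
    simp [this, Real.rpow_nonneg dist_nonneg]
  have hex : ∃ l, c.digit x l ≠ c.digit y l := not_forall.1 hall
  set j := Nat.find hex
  have hagree : ∀ l < j, c.digit x l = c.digit y l := fun l hl => not_not.1 (Nat.find_min hex hl)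
  have hρ0 : 0 ≤ ρ := (hr (c.head x)).trans (hρ _)
  have hD0 : 0 ≤ D := dist_nonneg.trans (hD x x)
  set C := 2 * D / δ
  set w : ℕ → ℝ := fun k => if j ≤ k then ρ ^ (k - j) else 0
  set a := (1 - γ) * dist x y ^ α
  have ha : 0 ≤ a := mul_nonneg (by linarith) (Real.rpow_nonneg dist_nonneg α)
  have hterm (k : ℕ) : |u (c.approx z k x) - u (c.approx z k y)| ≤ a * (1 + C * w k) := by
    simp only [w]
    split_ifs with hjk
    · have h1 : 1 ≤ 1 + C * ρ ^ (k - j) := le_add_of_nonneg_right (by positivity)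
      calc |u (c.approx z k x) - u (c.approx z k y)|
          ≤ (1 - γ) * dist (c.approx z k x) (c.approx z k y) ^ α := hu _ _
        _ ≤ (1 - γ) * (dist x y * (1 + C * ρ ^ (k - j))) ^ α :=
            mul_le_mul_of_nonneg_left (Real.rpow_le_rpow dist_nonneg
              (dist_approx_approx_le hr hρ hD hδ hsep hagree (Nat.find_spec hex) hjk) hα0)
              (by linarith)
        _ = a * (1 + C * ρ ^ (k - j)) ^ α := by
            rw [Real.mul_rpow dist_nonneg (by linarith)]; ring
        _ ≤ a * (1 + C * ρ ^ (k - j)) := by gcongr; exact Real.rpow_le_self_of_one_le h1 hα1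
    · rw [approx_congr fun l hl => hagree l (by omega), sub_self, abs_zero]
      simpa using ha
  have hw : C * 𝔼 k ∈ S, w k ≤ γ := by
    have hcard : (0 : ℝ) < S.card := by exact_mod_cast hS.card_pos
    rw [Finset.expect_eq_sum_div_card, mul_div_assoc', div_le_iff₀ hcard]
    exact (mul_le_mul_of_nonneg_left (sum_ite_pow_sub_le hρ0 hρ1 j S) (by positivity)).trans hSγ
  calc |c.levelAverage z u S x - c.levelAverage z u S y|
      = |𝔼 k ∈ S, (u (c.approx z k x) - u (c.approx z k y))| := by
        rw [levelAverage, levelAverage, Finset.expect_sub_distrib]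
    _ ≤ 𝔼 k ∈ S, a * (1 + C * w k) :=
        (Finset.abs_expect_le _ _).trans (Finset.expect_le_expect fun k _ => hterm k)
    _ = a * (1 + C * 𝔼 k ∈ S, w k) := by
        rw [← Finset.mul_expect, Finset.expect_add_distrib, Finset.expect_const hS,
          ← Finset.mul_expect]
    _ ≤ a * (1 + γ) := by gcongr
    _ ≤ dist x y ^ α := by
        have : 0 ≤ dist x y ^ α := Real.rpow_nonneg dist_nonneg α
        simp only [a]; nlinarith [mul_nonneg (sq_nonneg γ) this]

theorem exists_holder_finite_range_near [Finite ι] {ρ D δ α ε : ℝ}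
    (hr : ∀ i, 0 ≤ c.ratio i) (hρ : ∀ i, c.ratio i ≤ ρ) (hρ1 : ρ < 1)
    (hD : ∀ a b : Y, dist a b ≤ D) (hδ : 0 < δ)
    (hsep : ∀ x y, c.head x ≠ c.head y → δ ≤ dist x y) (hα0 : 0 < α) (hα1 : α ≤ 1)
    (hε : 0 < ε) (g : Y →ᵇ ℝ) (hg : ∀ x y, |g x - g y| ≤ dist x y ^ α) :
    ∃ h : Y → ℝ, (∀ x y, |h x - h y| ≤ dist x y ^ α) ∧ (∀ y, |h y - g y| ≤ ε) ∧
      (range h).Finite := by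
  rcases isEmpty_or_nonempty Y with hY | ⟨⟨z⟩⟩
  · exact ⟨g, hg, isEmptyElim, finite_range g⟩
  have hρ0 : 0 ≤ ρ := (hr (c.head z)).trans (hρ _)
  obtain ⟨γ', hγ'0, hγ'g⟩ := exists_pos_mul_lt (half_pos hε) ‖g‖
  set γ := min γ' 1
  have hγ0 : 0 < γ := lt_min hγ'0 one_pos
  have hγ1 : γ ≤ 1 := min_le_right _ _
  have hγg : γ * ‖g‖ ≤ ε / 2 := by
    rw [mul_comm]
    exact (mul_le_mul_of_nonneg_left (min_le_left _ _) (norm_nonneg g)).trans hγ'g.le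
  obtain ⟨M, hM⟩ : ∃ M, ∀ k ≥ M, (ρ ^ k * D) ^ α ≤ ε / 2 := by
    have : Tendsto (fun k : ℕ => (ρ ^ k * D) ^ α) atTop (𝓝 0) := by
      simpa [Real.zero_rpow hα0.ne'] using
        ((tendsto_pow_atTop_nhds_zero_of_lt_one hρ0 hρ1).mul_const D).rpow_const
          (Or.inr hα0.le)
    exact eventually_atTop.1 (this.eventually (ge_mem_nhds (half_pos hε)))
  obtain ⟨L, hL⟩ := exists_nat_ge (2 * D / δ * (1 - ρ)⁻¹ / γ)
  set S := Finset.Icc M (M + L)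
  have hS : S.Nonempty := Finset.nonempty_Icc.2 (by omega)
  have hSγ : 2 * D / δ * (1 - ρ)⁻¹ ≤ γ * S.card := by
    rw [show S.card = L + 1 by rw [Nat.card_Icc]; omega, ← div_le_iff₀' hγ0]
    push_cast
    linarith
  have hu (a b : Y) : |(1 - γ) * g a - (1 - γ) * g b| ≤ (1 - γ) * dist a b ^ α := by
    rw [← mul_sub, abs_mul, abs_of_nonneg (sub_nonneg.2 hγ1)]
    exact mul_le_mul_of_nonneg_left (hg a b) (sub_nonneg.2 hγ1)
  refine ⟨c.levelAverage z (fun y => (1 - γ) * g y) S,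
    abs_levelAverage_sub_le hr hρ hρ1 hD hδ hsep hα0.le hα1 hγ1 hu hS hSγ, fun y => ?_,
    c.finite_range_levelAverage _ _ _⟩
  refine abs_expect_sub_le_of_forall hS fun k hk => ?_
  calc |(1 - γ) * g (c.approx z k y) - g y|
      ≤ dist (c.approx z k y) y ^ α + γ * ‖g‖ := abs_one_sub_mul_sub_le hγ0.le g hg _ _
    _ ≤ (ρ ^ k * D) ^ α + ε / 2 := by
        gcongr
        exact dist_approx_self_le hr hρ hD k y
    _ ≤ ε := by linarith [hM k (Finset.mem_Icc.1 hk).1]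

end SimilarityCoding

lemma exists_similarityCoding {ι X : Type*} [PseudoMetricSpace X] {f : ι → X → X} {r : ι → ℝ}
    (hsim : ∀ i x y, dist (f i x) (f i y) = r i * dist x y) {F : Set X}
    (hinv : F = ⋃ i, f i '' F) :
    ∃ c : SimilarityCoding ι F, c.ratio = r ∧ ∀ i y, (c.map i y : X) = f i y := by
  have hmaps (i : ι) : MapsTo (f i) F F := fun y hy => by
    rw [hinv]
    exact mem_iUnion.2 ⟨i, mem_image_of_mem _ hy⟩
  have hpeel (y : F) : ∃ i, ∃ y' : F, f i y' = y := by
    obtain ⟨i, y', hy', h⟩ := mem_iUnion.1 (hinv.le y.2)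
    exact ⟨i, ⟨y', hy'⟩, h⟩
  choose head shift hhs using hpeel
  exact ⟨{ map := fun i => (hmaps i).restrict
           ratio := r
           dist_map := fun i a b => hsim i a b
           head := head
           shift := shift
           map_head_shift := fun y => Subtype.ext (hhs y) }, rfl, fun _ _ => rfl⟩

lemma isClosed_holderBall (α : ℝ) {p : ℕ} (F : Set (EuclideanSpace ℝ (Fin p))) :
    IsClosed (HolderBall α F) := by
  simp only [HolderBall, ofPred_forall]
  exact isClosed_iInter fun x => isClosed_iInter fun y =>
    isClosed_le ((continuous_eval_const x).sub (continuous_eval_const y)).abs continuous_const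

instance {α : ℝ} {p : ℕ} {F : Set (EuclideanSpace ℝ (Fin p))} :
    CompleteSpace (HolderBall α F) :=
  (isClosed_holderBall α F).completeSpace_coe

instance {α : ℝ} {p : ℕ} {F : Set (EuclideanSpace ℝ (Fin p))} : Nonempty (HolderBall α F) :=
  ⟨⟨0, fun x y => by simpa using Real.rpow_nonneg dist_nonneg α⟩⟩

theorem dense_setOf_finite_range_holderBall {ι : Type*} [Finite ι] {p : ℕ}
    {f : ι → EuclideanSpace ℝ (Fin p) → EuclideanSpace ℝ (Fin p)} {r : ι → ℝ}
    (hr : ∀ i, 0 < r i ∧ r i < 1) (hsim : ∀ i x y, dist (f i x) (f i y) = r i * dist x y)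
    {F : Set (EuclideanSpace ℝ (Fin p))} (hFc : IsCompact F) (hinv : F = ⋃ i, f i '' F)
    (hssc : ∀ i j, i ≠ j → Disjoint (f i '' F) (f j '' F)) {α : ℝ} (hα0 : 0 < α) (hα1 : α ≤ 1) :
    Dense {g : HolderBall α F | (range (g : ↥F →ᵇ ℝ)).Finite} := by
  have : CompactSpace F := isCompact_iff_compactSpace.1 hFc
  obtain ⟨c, rfl, hmap⟩ := exists_similarityCoding hsim hinv
  obtain ⟨ρ, hρ1, hρ⟩ := exists_lt_one_forall_le fun i => (hr i).2
  obtain ⟨δ, hδ, hsep⟩ := exists_pos_le_dist_of_pairwise_disjoint (K := fun i => f i '' F)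
    (fun i => hFc.image (LipschitzWith.of_dist_le_mul (K := ⟨_, (hr i).1.le⟩)
      fun x y => (hsim i x y).le).continuous) hssc
  have hmem (y : F) : (y : EuclideanSpace ℝ (Fin p)) ∈ f (c.head y) '' F :=
    ⟨c.shift y, (c.shift y).2, by rw [← hmap, c.map_head_shift]⟩
  rw [Metric.dense_iff]
  intro g ε hε
  have hD (a b : F) : dist a b ≤ Metric.diam F :=
    Metric.dist_le_diam_of_mem hFc.isBounded a.2 b.2
  obtain ⟨h, hhol, hclose, hfin⟩ := c.exists_holder_finite_range_near (fun i => (hr i).1.le) hρ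
    hρ1 hD hδ (fun x y hxy => hsep _ _ hxy _ (hmem x) _ (hmem y)) hα0 hα1 (half_pos hε) g g.2
  refine ⟨⟨.mkOfCompact ⟨h, continuous_of_abs_sub_le_dist_rpow hα0 hhol⟩, hhol⟩, ?_, hfin⟩
  refine lt_of_le_of_lt ((BoundedContinuousFunction.dist_le (half_pos hε).le).2 fun y => ?_)
    (half_lt_self hε)
  exact (Real.dist_eq _ _).trans_le (hclose y)

lemma dstarF_eq_zero_of_volume_range {p : ℕ} {F : Set (EuclideanSpace ℝ (Fin p))} {f : F → ℝ}
    (hf : volume (range f) = 0) : DstarF F f = 0 := by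
  refine IsGreatest.csSup_eq ⟨?_, fun d hd => ?_⟩
  · simp
  by_contra! hd0
  have hsub : {r : ℝ | ENNReal.ofReal d ≤ dimH (Subtype.val '' (f ⁻¹' {r}))} ⊆ range f := by
    intro r hr
    by_contra hnot
    have hempty : f ⁻¹' {r} = ∅ := eq_empty_of_forall_notMem fun x hx => hnot ⟨x, hx⟩
    simp only [mem_ofPred_eq, hempty, image_empty, dimH_empty, nonpos_iff_eq_zero,
      ENNReal.ofReal_eq_zero] at hr
    linarith
  exact (ne_of_gt hd) (measure_mono_null hsub hf)

lemma dStar_eq_zero {p : ℕ} {α : ℝ} {F : Set (EuclideanSpace ℝ (Fin p))}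
    {𝒢 : Set (HolderBall α F)} (hdense : Dense 𝒢) (hGδ : IsGδ 𝒢)
    (h𝒢 : ∀ g ∈ 𝒢, DstarF F ⇑(g : ↥F →ᵇ ℝ) = 0) : DStar α F = 0 := by
  refine IsGreatest.csSup_eq ⟨⟨𝒢, hdense, hGδ, ?_⟩, ?_⟩
  · exact (le_antisymm (Real.sInf_nonpos (forall_mem_image.2 fun g hg => (h𝒢 g hg).le))
      (Real.sInf_nonneg (forall_mem_image.2 fun g hg => (h𝒢 g hg).ge))).symm
  rintro _ ⟨G, hGdense, hGGδ, rfl⟩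
  obtain ⟨g, hgG, hg𝒢⟩ := (hGdense.inter_of_Gδ hGGδ hGδ hdense).nonempty
  exact Real.sInf_nonpos' ⟨_, mem_image_of_mem _ hgG, (h𝒢 g hg𝒢).le⟩

theorem stmt12_general {p : ℕ} (m : ℕ)
    (f : Fin m → EuclideanSpace ℝ (Fin p) → EuclideanSpace ℝ (Fin p))
    (r : Fin m → ℝ) (hr : ∀ i, 0 < r i ∧ r i < 1)
    (hsim : ∀ i, ∀ x y, dist (f i x) (f i y) = r i * dist x y)
    (F : Set (EuclideanSpace ℝ (Fin p))) (hFc : IsCompact F)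
    (hinv : F = ⋃ i, f i '' F)
    (hssc : ∀ i j, i ≠ j → Disjoint (f i '' F) (f j '' F))
    (α : ℝ) (hα0 : 0 < α) (hα1 : α < 1) :
    (∃ G : Set ↥(HolderBall α F), Dense G ∧ IsGδ G ∧
      ∀ g ∈ G, volume (Set.range
        ⇑((g : ↥(HolderBall α F)) : BoundedContinuousFunction ↥F ℝ)) = 0) ∧
    DStar α F = 0 := by
  have : CompactSpace F := isCompact_iff_compactSpace.1 hFc
  obtain ⟨hGδ, hdense⟩ := isGδ_setOf_eq_zero_and_dense
    (Φ := fun g : HolderBall α F => volume (range (g : ↥F →ᵇ ℝ)))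
    (upperSemicontinuous_volume_range.comp continuous_subtype_val)
    fun c hc => (dense_setOf_finite_range_holderBall hr hsim hFc hinv hssc hα0 hα1.le).mono
      fun g hg => (hg.measure_zero volume).trans_lt hc
  exact ⟨⟨_, hdense, hGδ, fun g hg => hg⟩,
    dStar_eq_zero hdense hGδ fun g hg => dstarF_eq_zero_of_volume_range hg⟩

/-- If `F` is a self-similar set satisfying the strong separation
condition (the attractor of contracting similarities with pairwise disjoint images),
then for every `0 < α < 1` there is a dense Gδ subset `𝒢` of `C₁^α(F)` on which
`λ(f(F)) = 0` for every `f ∈ 𝒢`, and `D_*(α, F) = 0`. -/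
theorem stmt12 {p : ℕ} (m : ℕ) (hm : 0 < m)
    (f : Fin m → EuclideanSpace ℝ (Fin p) → EuclideanSpace ℝ (Fin p))
    (r : Fin m → ℝ) (hr : ∀ i, 0 < r i ∧ r i < 1)
    (hsim : ∀ i, ∀ x y, dist (f i x) (f i y) = r i * dist x y)
    (F : Set (EuclideanSpace ℝ (Fin p))) (hFne : F.Nonempty) (hFc : IsCompact F)
    (hinv : F = ⋃ i, f i '' F)
    (hssc : ∀ i j, i ≠ j → Disjoint (f i '' F) (f j '' F))
    (α : ℝ) (hα0 : 0 < α) (hα1 : α < 1) :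
    (∃ G : Set ↥(HolderBall α F), Dense G ∧ IsGδ G ∧
      ∀ g ∈ G, volume (Set.range
        ⇑((g : ↥(HolderBall α F)) : BoundedContinuousFunction ↥F ℝ)) = 0) ∧
    DStar α F = 0 :=
  stmt12_general m f r hr hsim F hFc hinv hssc α hα0 hα1
end
end

section
/- Let C ⊆ [0,1] be the fat Cantor set with level-n interval length l_n = 1/(2^{n+1} − 1), and for each k ≥ 1 let I_k be a maximal (closed) subinterval of the stage-k set C_k. Then for every 1/2 < α ≤ 1, the ratio Λ^α(I_k \ C)/|I_k| tends to 0 as k → ∞, where Λ^α denotes α-dimensional Hausdorff capacity. -/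
open scoped ENNReal

noncomputable section

/-- `l_n = 1/(2^{n+1} − 1)`, the common length of the `2^n` maximal closed
subintervals of the stage-`n` set `C_n` of the fat Cantor set construction. -/
def lCant (n : ℕ) : ℝ := 1 / (2 ^ (n + 1) - 1)

/-- Auxiliary recursion computing the left endpoint of the level-`n` interval
indexed by a binary word (`false` = left child, `true` = right child); the first
argument is the current depth, the second the current left endpoint. -/
def leftEndAux : ℕ → ℝ → List Bool → ℝ
  | _, a, [] => a
  | n, a, b :: w => leftEndAux (n + 1) (if b then a + lCant n - lCant (n + 1) else a) w

/-- The left endpoint of the interval of the fat Cantor set construction indexed by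
the binary word `w` (an interval of level `w.length`). -/
def leftEnd (w : List Bool) : ℝ := leftEndAux 0 0 w

/-- The stage-`n` set `C_n`: the union of the `2^n` closed intervals of length
`l_n`; `C_n` arises from `C_{n−1}` by removing an open interval from the middle of
each maximal subinterval. -/
def cantorStage (n : ℕ) : Set ℝ :=
  ⋃ (w : List Bool) (_ : w.length = n), Set.Icc (leftEnd w) (leftEnd w + lCant n)

/-- The fat Cantor set `C = ⋂ₙ C_n` (of Lebesgue measure 1/2). -/
def fatC : Set ℝ := ⋂ n : ℕ, cantorStage n

/-- The `α`-dimensional Hausdorff capacity (Hausdorff content) of `E ⊆ ℝ`. -/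
def hContent (α : ℝ) (E : Set ℝ) : ℝ≥0∞ :=
  ⨅ (U : ℕ → Set ℝ) (_ : E ⊆ ⋃ i, U i), ∑' i, EMetric.diam (U i) ^ α

/-!
`I_w \ C` is covered by the middle gaps of all descendants of `w`. At depth `n` below
`I_w` there are `2^n` of them, each of length `l_{k+n} - 2 l_{k+n+1} ≤ 4^(-(k+n))`
(`k = |w|`), so `Λ^α(I_w \ C) ≤ ∑ₙ 2^n 4^(-α(k+n)) = 4^(-αk) / (1 - 2·4^(-α))`, finite
because `α > 1/2`. Since `l_k⁻¹ < 2^(k+1)`, the ratio is `O((2·4^(-α))^k)`.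
-/

lemma hContent_le_tsum {ι : Type*} [Countable ι] [Infinite ι] (α : ℝ) {E : Set ℝ}
    {U : ι → Set ℝ} (hE : E ⊆ ⋃ i, U i) : hContent α E ≤ ∑' i, Metric.ediam (U i) ^ α := by
  obtain ⟨e⟩ := nonempty_equiv_of_countable (α := ℕ) (β := ι)
  refine (iInf₂_le (fun n => U (e n)) ?_).trans
    (e.tsum_eq fun i => Metric.ediam (U i) ^ α).le
  rwa [e.surjective.iUnion_comp U]

lemma tsum_comp_length {α : Type*} [Fintype α] (f : ℕ → ℝ≥0∞) :
    ∑' u : List α, f u.length = ∑' n, (Fintype.card α : ℝ≥0∞) ^ n * f n := by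
  rw [← ENNReal.tsum_fiberwise _ List.length]
  refine tsum_congr fun n => ?_
  calc ∑' u : List.length ⁻¹' {n}, f (u : List α).length
      = ∑' _ : List.length ⁻¹' {n}, f n :=
        tsum_congr fun u => by rw [show (u : List α).length = n from u.2]
    _ = ENat.card (List.Vector α n) * f n := ENNReal.tsum_const _
    _ = (Fintype.card α : ℝ≥0∞) ^ n * f n := by
      rw [ENat.card_eq_coe_fintype_card, card_vector]; push_cast; rfl

lemma one_le_two_pow_succ_sub_one (n : ℕ) : (1 : ℝ) ≤ 2 ^ (n + 1) - 1 := by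
  have : (2 : ℝ) ≤ 2 ^ (n + 1) := le_self_pow₀ one_le_two n.succ_ne_zero
  linarith

lemma lCant_pos (n : ℕ) : 0 < lCant n :=
  one_div_pos.2 (zero_lt_one.trans_le (one_le_two_pow_succ_sub_one n))

lemma inv_lCant (n : ℕ) : (lCant n)⁻¹ = 2 ^ (n + 1) - 1 := by
  rw [lCant, one_div, inv_inv]

lemma lCant_succ_le (n : ℕ) : lCant (n + 1) ≤ lCant n := by
  refine one_div_le_one_div_of_le (zero_lt_one.trans_le (one_le_two_pow_succ_sub_one n)) ?_
  gcongr <;> norm_num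

/-- The gap removed from a level-`n` interval has length
`1 / ((2^(n+1) - 1) (2^(n+2) - 1)) ≤ 4^(-n)`. -/
lemma lCant_sub_two_mul_lCant_succ_le (n : ℕ) :
    lCant n - 2 * lCant (n + 1) ≤ (1 / 4 : ℝ) ^ n := by
  have hx : (1 : ℝ) ≤ 2 ^ n := one_le_pow₀ one_le_two
  have ha : (0 : ℝ) < 2 ^ n * 2 - 1 := by linarith
  have hb : (0 : ℝ) < 2 ^ n * 2 * 2 - 1 := by linarith
  have h4 : (1 / 4 : ℝ) ^ n = 1 / (2 ^ n) ^ 2 := by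
    rw [one_div_pow, ← pow_mul, mul_comm, pow_mul]; norm_num
  rw [h4, lCant, lCant, pow_succ, pow_succ, pow_succ, mul_one_div, div_sub_div _ _ ha.ne' hb.ne']
  refine div_le_div₀ zero_le_one (by linarith) (by positivity) ?_
  nlinarith

lemma leftEndAux_append (u v : List Bool) (n : ℕ) (a : ℝ) :
    leftEndAux n a (u ++ v) = leftEndAux (n + u.length) (leftEndAux n a u) v := by
  induction u generalizing n a with
  | nil => rfl
  | cons b u ih =>
    simp only [List.cons_append, leftEndAux, ih, List.length_cons, Nat.add_assoc, Nat.add_comm 1]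

lemma leftEnd_append_false (w : List Bool) : leftEnd (w ++ [false]) = leftEnd w := by
  rw [leftEnd, leftEndAux_append]; rfl

lemma leftEnd_append_true (w : List Bool) :
    leftEnd (w ++ [true]) = leftEnd w + lCant w.length - lCant (w.length + 1) := by
  rw [leftEnd, leftEndAux_append, zero_add]; rfl

/-- The closed interval of `C_{|w|}` indexed by the word `w` (the paper's `I_w`). -/
def cell (w : List Bool) : Set ℝ := Set.Icc (leftEnd w) (leftEnd w + lCant w.length)

/-- The closed gap between the two children of `cell w`. -/
def middleGap (w : List Bool) : Set ℝ :=
  Set.Icc (leftEnd w + lCant (w.length + 1))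
    (leftEnd w + lCant w.length - lCant (w.length + 1))

lemma cell_append_false (w : List Bool) :
    cell (w ++ [false]) = Set.Icc (leftEnd w) (leftEnd w + lCant (w.length + 1)) := by
  rw [cell, leftEnd_append_false, List.length_append, List.length_singleton]

lemma cell_append_true (w : List Bool) :
    cell (w ++ [true]) =
      Set.Icc (leftEnd w + lCant w.length - lCant (w.length + 1)) (leftEnd w + lCant w.length) := by
  rw [cell, leftEnd_append_true, List.length_append, List.length_singleton, sub_add_cancel]

lemma cell_append_subset (w : List Bool) (b : Bool) : cell (w ++ [b]) ⊆ cell w := by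
  have := lCant_succ_le w.length
  cases b
  · rw [cell_append_false]; exact Set.Icc_subset_Icc le_rfl (by linarith)
  · rw [cell_append_true]; exact Set.Icc_subset_Icc (by linarith) le_rfl

lemma cell_subset_union (w : List Bool) :
    cell w ⊆ cell (w ++ [false]) ∪ middleGap w ∪ cell (w ++ [true]) := by
  rintro x ⟨hx₁, hx₂⟩
  rw [cell_append_false, cell_append_true]
  by_cases hl : x ≤ leftEnd w + lCant (w.length + 1)
  · exact .inl (.inl ⟨hx₁, hl⟩)
  by_cases hr : leftEnd w + lCant w.length - lCant (w.length + 1) ≤ x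
  · exact .inr ⟨hr, hx₂⟩
  exact .inl (.inr ⟨by linarith, by linarith⟩)

lemma cantorStage_eq (n : ℕ) : cantorStage n = ⋃ (w : List Bool) (_ : w.length = n), cell w := by
  refine Set.iUnion₂_congr fun w hw => ?_
  rw [cell, hw]

lemma cell_subset_cantorStage (w : List Bool) : cell w ⊆ cantorStage w.length := by
  rw [cantorStage_eq]
  exact Set.subset_biUnion_of_mem (u := fun w : List Bool => cell w) rfl

lemma cantorStage_antitone : Antitone cantorStage := by
  refine antitone_nat_of_succ_le fun n => ?_
  rw [cantorStage_eq, Set.iUnion₂_subset_iff]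
  intro v hv
  obtain ⟨w, b, rfl⟩ := (List.eq_nil_or_concat' v).resolve_left (by rintro rfl; simp at hv)
  have hw : w.length = n := by simpa using hv
  exact hw ▸ (cell_append_subset w b).trans (cell_subset_cantorStage w)

lemma cell_subset_iUnion_middleGap_union_cantorStage (m : ℕ) (w : List Bool) :
    cell w ⊆ (⋃ u, middleGap (w ++ u)) ∪ cantorStage (w.length + m) := by
  induction m generalizing w with
  | zero => exact (cell_subset_cantorStage w).trans Set.subset_union_right
  | succ m ih =>
    have child (b : Bool) :
        cell (w ++ [b]) ⊆ (⋃ u, middleGap (w ++ u)) ∪ cantorStage (w.length + (m + 1)) := by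
      refine (ih (w ++ [b])).trans (Set.union_subset_union ?_ ?_)
      · refine Set.iUnion_subset fun u => ?_
        rw [List.append_assoc, List.singleton_append]
        exact Set.subset_iUnion (fun u => middleGap (w ++ u)) (b :: u)
      · rw [List.length_append, List.length_singleton, Nat.add_right_comm, Nat.add_assoc]
    have gap : middleGap w ⊆ ⋃ u, middleGap (w ++ u) := by
      simpa only [List.append_nil] using Set.subset_iUnion (fun u => middleGap (w ++ u)) []
    exact (cell_subset_union w).trans <| Set.union_subset
      (Set.union_subset (child false) (Set.subset_union_of_subset_left gap _)) (child true)

lemma cell_diff_fatC_subset (w : List Bool) : cell w \ fatC ⊆ ⋃ u, middleGap (w ++ u) := by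
  rintro x ⟨hx, hxC⟩
  obtain ⟨m, hm⟩ : ∃ m, x ∉ cantorStage m := by simpa [fatC] using hxC
  refine (cell_subset_iUnion_middleGap_union_cantorStage m w hx).resolve_right fun h => hm ?_
  exact cantorStage_antitone (Nat.le_add_left m w.length) h

lemma ediam_middleGap_rpow_le {α : ℝ} (hα : 0 ≤ α) (w : List Bool) :
    Metric.ediam (middleGap w) ^ α ≤ ENNReal.ofReal (((1 / 4 : ℝ) ^ α) ^ w.length) := by
  rw [middleGap, Real.ediam_Icc, ← Real.rpow_natCast, ← Real.rpow_mul (by norm_num), mul_comm,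
    Real.rpow_mul (by norm_num), Real.rpow_natCast,
    ← ENNReal.ofReal_rpow_of_nonneg (by positivity) hα]
  gcongr
  linarith [lCant_sub_two_mul_lCant_succ_le w.length]

lemma two_mul_quarter_rpow_lt_one {α : ℝ} (hα : 1 / 2 < α) : 2 * (1 / 4 : ℝ) ^ α < 1 := by
  have half : (1 / 4 : ℝ) ^ (1 / 2 : ℝ) = 1 / 2 := by
    rw [show (1 / 4 : ℝ) = (1 / 2) ^ (2 : ℝ) by norm_num, ← Real.rpow_mul (by norm_num)]
    norm_num
  have := Real.rpow_lt_rpow_of_exponent_gt (by norm_num : (0 : ℝ) < 1 / 4) (by norm_num) hα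
  linarith

lemma hContent_cell_diff_fatC_le {α : ℝ} (hα : 0 ≤ α) (ht : 2 * (1 / 4 : ℝ) ^ α < 1)
    (w : List Bool) :
    hContent α (cell w \ fatC) ≤
      ENNReal.ofReal (((1 / 4 : ℝ) ^ α) ^ w.length / (1 - 2 * (1 / 4 : ℝ) ^ α)) := by
  set t := (1 / 4 : ℝ) ^ α
  calc hContent α (cell w \ fatC)
      ≤ ∑' u, Metric.ediam (middleGap (w ++ u)) ^ α :=
        hContent_le_tsum α (cell_diff_fatC_subset w)
    _ ≤ ∑' u : List Bool, ENNReal.ofReal (t ^ (w.length + u.length)) :=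
      ENNReal.tsum_le_tsum fun u => by
        simpa only [List.length_append] using ediam_middleGap_rpow_le hα (w ++ u)
    _ = ∑' n, 2 ^ n * ENNReal.ofReal (t ^ (w.length + n)) := by
      simpa using tsum_comp_length (α := Bool) fun n => ENNReal.ofReal (t ^ (w.length + n))
    _ = ∑' n, ENNReal.ofReal (t ^ w.length * (2 * t) ^ n) := by
      refine tsum_congr fun n => ?_
      rw [show t ^ w.length * (2 * t) ^ n = 2 ^ n * t ^ (w.length + n) by ring,
        ENNReal.ofReal_mul (by positivity), ENNReal.ofReal_pow zero_le_two, ENNReal.ofReal_ofNat]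
    _ = ENNReal.ofReal (t ^ w.length / (1 - 2 * t)) := by
      rw [← ENNReal.ofReal_tsum_of_nonneg (fun n => by positivity)
        ((summable_geometric_of_lt_one (by positivity) ht).mul_left _), tsum_mul_left,
        tsum_geometric_of_lt_one (by positivity) ht, div_eq_mul_inv]

theorem stmt13_general (α : ℝ) (hα1 : 1 / 2 < α)
    (I : ℕ → Set ℝ)
    (hI : ∀ k, ∃ w : List Bool, w.length = k ∧
      I k = Set.Icc (leftEnd w) (leftEnd w + lCant k)) :
    Filter.Tendsto (fun k => (hContent α (I k \ fatC)).toReal / lCant k)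
      Filter.atTop (nhds 0) := by
  set t := (1 / 4 : ℝ) ^ α
  have ht : 2 * t < 1 := two_mul_quarter_rpow_lt_one hα1
  have bound (k : ℕ) :
      (hContent α (I k \ fatC)).toReal / lCant k ≤ 2 / (1 - 2 * t) * (2 * t) ^ k := by
    obtain ⟨w, rfl, hw⟩ := hI k
    rw [hw, ← cell]
    have hK : 0 ≤ t ^ w.length / (1 - 2 * t) := div_nonneg (by positivity) (by linarith)
    have hle := ENNReal.toReal_le_of_le_ofReal hK (hContent_cell_diff_fatC_le (by linarith) ht w)
    calc (hContent α (cell w \ fatC)).toReal / lCant w.length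
        ≤ t ^ w.length / (1 - 2 * t) * (lCant w.length)⁻¹ :=
          div_le_div_of_nonneg_right hle (lCant_pos _).le
      _ ≤ t ^ w.length / (1 - 2 * t) * 2 ^ (w.length + 1) := by
          rw [inv_lCant]; gcongr; linarith
      _ = 2 / (1 - 2 * t) * (2 * t) ^ w.length := by ring
  refine squeeze_zero (fun k => div_nonneg ENNReal.toReal_nonneg (lCant_pos k).le) bound ?_
  simpa using (tendsto_pow_atTop_nhds_zero_of_lt_one (by positivity) ht).const_mul (2 / (1 - 2 * t))

/-- For the fat Cantor set `C` with `l_n = 1/(2^{n+1} − 1)`: if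
`I k` is a maximal closed subinterval of the stage-`k` set `C_k` for each `k`, then
for every `1/2 < α ≤ 1` the ratio `Λ^α(I_k \ C) / |I_k|` tends to `0` as `k → ∞`. -/
theorem stmt13 (α : ℝ) (hα1 : 1 / 2 < α) (hα2 : α ≤ 1)
    (I : ℕ → Set ℝ)
    (hI : ∀ k, ∃ w : List Bool, w.length = k ∧
      I k = Set.Icc (leftEnd w) (leftEnd w + lCant k)) :
    Filter.Tendsto (fun k => (hContent α (I k \ fatC)).toReal / lCant k)
      Filter.atTop (nhds 0) :=
  stmt13_general α hα1 I hI

end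
end

section
/- Assume F ⊆ ℝ^p is compact and c > 0 and 0 < α ≤ 1 are fixed. Then the Lipschitz c-Hölder-α functions on F form a dense subset (in the supremum metric) of the set of c-Hölder-α functions on F; that is, for every c-Hölder-α function f : F → ℝ and every ε > 0 there exists g : F → ℝ which is Lipschitz, c-Hölder-α, and satisfies ‖f − g‖_∞ < ε. -/
noncomputable section

/-- Let `F ⊆ ℝ^p` be compact, `c > 0` and `0 < α ≤ 1`. Then the
Lipschitz `c`-Hölder-α functions are dense (in the supremum metric) among the
`c`-Hölder-α functions on `F`: for every `c`-Hölder-α function `f : F → ℝ` and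
every `ε > 0` there is a function `g : F → ℝ` which is Lipschitz (with some
constant `M`), `c`-Hölder-α, and satisfies `‖f − g‖_∞ < ε`. -/
theorem stmt19 {p : ℕ} (F : Set (EuclideanSpace ℝ (Fin p))) (hFc : IsCompact F)
    (c : ℝ) (hc : 0 < c) (α : ℝ) (hα0 : 0 < α) (hα1 : α ≤ 1)
    (f : EuclideanSpace ℝ (Fin p) → ℝ)
    (hf : ∀ x ∈ F, ∀ y ∈ F, |f x - f y| ≤ c * dist x y ^ α)
    (ε : ℝ) (hε : 0 < ε) :
    ∃ g : EuclideanSpace ℝ (Fin p) → ℝ,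
      (∃ M : ℝ, 0 < M ∧ ∀ x ∈ F, ∀ y ∈ F, |g x - g y| ≤ M * dist x y) ∧
      (∀ x ∈ F, ∀ y ∈ F, |g x - g y| ≤ c * dist x y ^ α) ∧
      ∀ x ∈ F, |f x - g x| < ε := by
  rcases F.eq_empty_or_nonempty with hF | hF
  · subst hF
    exact ⟨f, ⟨1, one_pos, by simp⟩, by simp, by simp⟩
  have hαne : α ≠ 0 := ne_of_gt hα0
  have hεc : 0 < ε / (2 * c) := by positivity
  set δ : ℝ := (ε / (2 * c)) ^ (α⁻¹) with hδdef
  have hδ : 0 < δ := Real.rpow_pos_of_pos hεc _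
  set M : ℝ := c * δ ^ (α - 1) with hMdef
  have hM : 0 < M := by positivity
  set ω : ℝ → ℝ := fun t => min (M * t) (c * t ^ α) with hωdef
  have hδα : δ ^ α = ε / (2 * c) := Real.rpow_inv_rpow hεc.le hαne
  set K : ℝ := c * δ ^ α with hKdef
  have hK : K = ε / 2 := by
    rw [hKdef, hδα]; field_simp
  have hKpos : 0 < K := by rw [hK]; linarith
  have hω0 : ω 0 = 0 := by
    simp [hωdef, Real.zero_rpow hαne]
  have hωnonneg : ∀ t : ℝ, 0 ≤ t → 0 ≤ ω t := by
    intro t ht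
    refine le_min (by positivity) (by positivity)
  -- small t : M * t ≤ c * t ^ α
  have hsmall : ∀ t : ℝ, 0 ≤ t → t ≤ δ → M * t ≤ c * t ^ α := by
    intro t ht htδ
    rcases eq_or_lt_of_le ht with h0 | h0
    · simp [← h0, Real.zero_rpow hαne]
    · have h1 : δ ^ (α - 1) ≤ t ^ (α - 1) :=
        Real.rpow_le_rpow_of_nonpos h0 htδ (by linarith)
      have h2 : t ^ (α - 1) * t = t ^ α := by
        rw [← Real.rpow_add_one (ne_of_gt h0)]; ring_nf
      calc M * t = c * δ ^ (α - 1) * t := by rw [hMdef]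
        _ ≤ c * t ^ (α - 1) * t := by gcongr
        _ = c * t ^ α := by rw [mul_assoc, h2]
  -- big t : c * t ^ α ≤ M * t
  have hbig : ∀ t : ℝ, δ ≤ t → c * t ^ α ≤ M * t := by
    intro t htδ
    have ht : 0 < t := lt_of_lt_of_le hδ htδ
    have h1 : t ^ (α - 1) ≤ δ ^ (α - 1) :=
      Real.rpow_le_rpow_of_nonpos hδ htδ (by linarith)
    have h2 : t ^ (α - 1) * t = t ^ α := by
      rw [← Real.rpow_add_one (ne_of_gt ht)]; ring_nf
    calc c * t ^ α = c * t ^ (α - 1) * t := by rw [mul_assoc, h2]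
      _ ≤ c * δ ^ (α - 1) * t := by gcongr
      _ = M * t := by rw [hMdef]
  -- key error bound : c * t ^ α ≤ ω t + K
  have hL4 : ∀ t : ℝ, 0 ≤ t → c * t ^ α ≤ ω t + K := by
    intro t ht
    rcases le_total t δ with h | h
    · have h1 : c * t ^ α ≤ K := by
        rw [hKdef]
        have := Real.rpow_le_rpow ht h hα0.le
        nlinarith
      have := hωnonneg t ht
      linarith
    · have h1 : ω t = c * t ^ α := min_eq_right (hbig t h)
      linarith [hωnonneg t ht]
  -- monotonicity of ω
  have hωmono : ∀ s t : ℝ, 0 ≤ s → s ≤ t → ω s ≤ ω t := by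
    intro s t hs hst
    exact min_le_min (by gcongr)
      (mul_le_mul_of_nonneg_left (Real.rpow_le_rpow hs hst hα0.le) hc.le)
  -- subadditivity of ω
  have hωsub : ∀ a b : ℝ, 0 ≤ a → 0 ≤ b → ω (a + b) ≤ ω a + ω b := by
    intro a b ha hb
    rcases le_total (a + b) δ with h | h
    · have h1 : ω a = M * a := min_eq_left (hsmall a ha (by linarith))
      have h2 : ω b = M * b := min_eq_left (hsmall b hb (by linarith))
      have h3 : ω (a + b) ≤ M * (a + b) := min_le_left _ _
      rw [h1, h2]; linarith
    · -- each piece c * (a+b)^(α-1) * a ≤ ω a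
      have hab : 0 < a + b := lt_of_lt_of_le hδ h
      have hpiece : ∀ u : ℝ, 0 ≤ u → u ≤ a + b → c * (a + b) ^ (α - 1) * u ≤ ω u := by
        intro u hu hu2
        refine le_min ?_ ?_
        · have h1 : (a + b) ^ (α - 1) ≤ δ ^ (α - 1) :=
            Real.rpow_le_rpow_of_nonpos hδ h (by linarith)
          rw [hMdef]; gcongr
        · rcases eq_or_lt_of_le hu with h0 | h0
          · simp [← h0, Real.zero_rpow hαne]
          · have h1 : (a + b) ^ (α - 1) ≤ u ^ (α - 1) :=
              Real.rpow_le_rpow_of_nonpos h0 hu2 (by linarith)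
            have h2 : u ^ (α - 1) * u = u ^ α := by
              rw [← Real.rpow_add_one (ne_of_gt h0)]; ring_nf
            calc c * (a + b) ^ (α - 1) * u ≤ c * u ^ (α - 1) * u := by gcongr
              _ = c * u ^ α := by rw [mul_assoc, h2]
      have hsplit : c * (a + b) ^ α
          = c * (a + b) ^ (α - 1) * a + c * (a + b) ^ (α - 1) * b := by
        have h2 : (a + b) ^ (α - 1) * (a + b) = (a + b) ^ α := by
          rw [← Real.rpow_add_one (ne_of_gt hab)]; ring_nf
        rw [← h2]; ring
      have h3 : ω (a + b) ≤ c * (a + b) ^ α := min_le_right _ _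
      have h4 := hpiece a ha (by linarith)
      have h5 := hpiece b hb (by linarith)
      linarith [hsplit ▸ h3]
  -- the inf-convolution
  set g : EuclideanSpace ℝ (Fin p) → ℝ :=
    fun x => sInf ((fun y => f y + ω (dist x y)) '' F) with hgdef
  have hlb : ∀ x ∈ F, ∀ y ∈ F, f x - K ≤ f y + ω (dist x y) := by
    intro x hx y hy
    have h1 : f x - f y ≤ c * dist x y ^ α :=
      le_trans (le_abs_self _) (hf x hx y hy)
    have h2 := hL4 (dist x y) dist_nonneg
    linarith
  have hbdd : ∀ x ∈ F, BddBelow ((fun y => f y + ω (dist x y)) '' F) := by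
    intro x hx
    exact ⟨f x - K, by rintro _ ⟨y, hy, rfl⟩; exact hlb x hx y hy⟩
  have hne : ∀ x : EuclideanSpace ℝ (Fin p),
      ((fun y => f y + ω (dist x y)) '' F).Nonempty := fun x => hF.image _
  have hgle : ∀ x ∈ F, g x ≤ f x := by
    intro x hx
    have : g x ≤ f x + ω (dist x x) := csInf_le (hbdd x hx) ⟨x, hx, rfl⟩
    simpa [dist_self, hω0] using this
  have hgge : ∀ x ∈ F, f x - K ≤ g x := by
    intro x hx
    exact le_csInf (hne x) (by rintro _ ⟨y, hy, rfl⟩; exact hlb x hx y hy)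
  -- modulus bound
  have hmod : ∀ x ∈ F, ∀ x' ∈ F, g x ≤ g x' + ω (dist x x') := by
    intro x hx x' hx'
    have h1 : g x - ω (dist x x') ≤ g x' := by
      refine le_csInf (hne x') ?_
      rintro _ ⟨y, hy, rfl⟩
      show g x - ω (dist x x') ≤ f y + ω (dist x' y)
      have h2 : g x ≤ f y + ω (dist x y) := csInf_le (hbdd x hx) ⟨y, hy, rfl⟩
      have h3 : dist x y ≤ dist x' y + dist x x' := by
        have := dist_triangle x x' y
        linarith [dist_comm x x' ▸ this]
      have h4 : ω (dist x y) ≤ ω (dist x' y + dist x x') :=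
        hωmono _ _ dist_nonneg h3
      have h5 : ω (dist x' y + dist x x') ≤ ω (dist x' y) + ω (dist x x') :=
        hωsub _ _ dist_nonneg dist_nonneg
      linarith
    linarith
  have habs : ∀ x ∈ F, ∀ x' ∈ F, |g x - g x'| ≤ ω (dist x x') := by
    intro x hx x' hx'
    rw [abs_sub_le_iff]
    constructor
    · linarith [hmod x hx x' hx']
    · have := hmod x' hx' x hx
      rw [dist_comm x' x] at this
      linarith
  refine ⟨g, ⟨M, hM, ?_⟩, ?_, ?_⟩
  · intro x hx y hy
    exact le_trans (habs x hx y hy) (min_le_left _ _)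
  · intro x hx y hy
    exact le_trans (habs x hx y hy) (min_le_right _ _)
  · intro x hx
    have h1 := hgle x hx
    have h2 := hgge x hx
    rw [abs_sub_lt_iff]
    constructor <;> [skip; linarith [hKpos]]
    · rw [hK] at h2; linarith
end
end
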